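/- arXiv:2409.17297 — 2 statements merged into one kernel-verified Lean document; each statement's English description precedes it below -/
import Mathlib

section
/- Let K be a positive self-adjoint (possibly unbounded) operator with bounded inverse, V a bounded self-adjoint operator with polar decomposition V = U|V|, and λ > 0. Then the Birman–Schwinger operator B = λ U|V|^{1/2} K^{-1} |V|^{1/2} is isospectral (away from 0) to the self-adjoint operator λ K^{-1/2} V K^{-1/2}; in particular B has real spectrum. -/
/-!
Write `|V|^{1/2} = W` and `K^{-1} = S²` with `S = K^{-1/2}`. Then
`B = (λ U W S) (S W)`, and the reversed product is `λ S W U W S = λ S U W² S = λ S V S`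
because `U` commutes with `W` (a function of `|V|`) and `V = U |V| = U W²`.
Since `xy` and `yx` have the same nonzero spectrum, `B` is isospectral away from `0` to the
self-adjoint operator `λ S V S`, whose spectrum is real.
-/

theorem spectrum_smul_mul_mul_self_mul_diff_zero {𝕜 R A : Type*} [Field 𝕜] [Ring A]
    [Algebra 𝕜 A] [SMul R A] [IsScalarTower R A A] [SMulCommClass R A A] (r : R) {U W S : A}
    (hUW : Commute U W) :
    spectrum 𝕜 (r • (U * W * (S * S) * W)) \ {0} =
      spectrum 𝕜 (r • (S * (U * (W * W)) * S)) \ {0} := by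
  have hsplit : r • (U * W * (S * S) * W) = (r • (U * W * S)) * (S * W) := by
    rw [smul_mul_assoc]; congr 1; noncomm_ring
  have hswap : (S * W) * (r • (U * W * S)) = r • (S * (U * (W * W)) * S) := by
    calc (S * W) * (r • (U * W * S)) = r • (S * (W * U) * W * S) := by
          rw [mul_smul_comm]; congr 1; noncomm_ring
      _ = r • (S * (U * (W * W)) * S) := by rw [← hUW.eq]; congr 1; noncomm_ring
  rw [hsplit, spectrum.nonzero_mul_comm, hswap]

theorem im_eq_zero_of_mem_spectrum_of_spectrum_diff_zero_eq {A : Type*} [CStarAlgebra A]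
    {a b : A} (hb : IsSelfAdjoint b) (hab : spectrum ℂ a \ {0} = spectrum ℂ b \ {0})
    {z : ℂ} (hz : z ∈ spectrum ℂ a) : z.im = 0 := by
  rcases eq_or_ne z 0 with rfl | hz0
  · rfl
  · have hzb : z ∈ spectrum ℂ b \ {0} := hab ▸ ⟨hz, hz0⟩
    exact hb.im_eq_zero_of_mem_spectrum hzb.1

theorem stmt_11_general
    {H : Type*} [NormedAddCommGroup H] [InnerProductSpace ℂ H]
    [CompleteSpace H]
    (Kinv V U : H →L[ℂ] H)
    (hKinvpos : (0 : H →L[ℂ] H) ≤ Kinv)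
    (hV : IsSelfAdjoint V)
    (hpolar : V = U * CFC.sqrt (V * V))
    (hcomm : U * CFC.sqrt (V * V) = CFC.sqrt (V * V) * U)
    (lam : ℝ)
    (B : H →L[ℂ] H)
    (hB : B = lam • (U * CFC.sqrt (CFC.sqrt (V * V)) * Kinv *
      CFC.sqrt (CFC.sqrt (V * V)))) :
    spectrum ℂ B \ {0} =
      spectrum ℂ (lam • (CFC.sqrt Kinv * V * CFC.sqrt Kinv)) \ {0} ∧
    IsSelfAdjoint (lam • (CFC.sqrt Kinv * V * CFC.sqrt Kinv)) ∧
    ∀ z ∈ spectrum ℂ B, z.im = 0 := by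
  set M := CFC.sqrt (V * V)
  set W := CFC.sqrt M
  set S := CFC.sqrt Kinv
  have hUW : Commute U W := (Commute.cfcₙ_nnreal (Commute.symm hcomm) NNReal.sqrt).symm
  have hS : IsSelfAdjoint S := .of_nonneg (CFC.sqrt_nonneg Kinv)
  have hB' : B = lam • (U * W * (S * S) * W) := by
    rw [hB, CFC.sqrt_mul_sqrt_self Kinv hKinvpos]
  have hV' : V = U * (W * W) := by
    rw [CFC.sqrt_mul_sqrt_self M (CFC.sqrt_nonneg _), ← hpolar]
  have hspec : spectrum ℂ B \ {0} = spectrum ℂ (lam • (S * V * S)) \ {0} := by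
    rw [hB', spectrum_smul_mul_mul_self_mul_diff_zero _ hUW, ← hV']
  have hsa : IsSelfAdjoint (lam • (S * V * S)) := by
    simpa only [hS.star_eq] using (IsSelfAdjoint.all lam).smul (hV.conjugate S)
  exact ⟨hspec, hsa, fun z hz ↦ im_eq_zero_of_mem_spectrum_of_spectrum_diff_zero_eq hsa hspec hz⟩

set_option synthInstance.maxHeartbeats 1000000 in
/-- Birman–Schwinger principle (isospectrality): let `K` be a positive
self-adjoint operator with `K ≥ c > 0` (hence with bounded inverse `Kinv`),
`V` a bounded self-adjoint operator with polar decomposition `V = U * |V|`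
where `U` commutes with `|V|`, and `λ > 0`.  Then the Birman–Schwinger
operator `B = λ U |V|^{1/2} K⁻¹ |V|^{1/2}` is isospectral away from `0` to
the self-adjoint operator `λ K^{-1/2} V K^{-1/2}`; in particular `B` has
real spectrum. -/
theorem stmt_11
    {H : Type*} [NormedAddCommGroup H] [InnerProductSpace ℂ H]
    [CompleteSpace H]
    (K Kinv V U : H →L[ℂ] H) (c : ℝ) (hc : 0 < c)
    (hK : IsSelfAdjoint K)
    (hKc : ∀ ψ : H, c * ‖ψ‖ ^ 2 ≤ (inner ℂ ψ (K ψ) : ℂ).re)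
    (hKinv : K * Kinv = 1) (hKinv' : Kinv * K = 1)
    (hKinvpos : (0 : H →L[ℂ] H) ≤ Kinv)
    (hV : IsSelfAdjoint V)
    (hpolar : V = U * CFC.sqrt (V * V))
    (hcomm : U * CFC.sqrt (V * V) = CFC.sqrt (V * V) * U)
    (lam : ℝ) (hlam : 0 < lam)
    (B : H →L[ℂ] H)
    (hB : B = lam • (U * CFC.sqrt (CFC.sqrt (V * V)) * Kinv *
      CFC.sqrt (CFC.sqrt (V * V)))) :
    spectrum ℂ B \ {0} =
      spectrum ℂ (lam • (CFC.sqrt Kinv * V * CFC.sqrt Kinv)) \ {0} ∧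
    IsSelfAdjoint (lam • (CFC.sqrt Kinv * V * CFC.sqrt Kinv)) ∧
    ∀ z ∈ spectrum ℂ B, z.im = 0 :=
  stmt_11_general Kinv V U hKinvpos hV hpolar hcomm lam B hB
end

section
/- Block variational inequality: let A be a bounded self-adjoint operator on H = H₁ ⊕ H₂ which is block-diagonal, and let B be self-adjoint and block off-diagonal (i.e., B maps H₁ into H₂ and H₂ into H₁). Then for every κ ∈ ℝ, inf spec(A + κB) ≤ inf spec(A); that is, an off-diagonal perturbation can only lower or preserve the bottom of the spectrum at leading order in the sense that κ = 0 is a local maximum of κ ↦ inf spec(A + κB). -/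
/-!
By polarization the diagonal blocks `PBP` and `(1 - P)B(1 - P)` vanish, so the reflection
`U = 2P - 1` satisfies `U A U = A` and `U B U = -B`. Hence `A + κB` and `A - κB` are unitarily
equivalent and have the same spectrum, with bottom `m`.
Then `A + κB ≥ m` and `A - κB ≥ m`; averaging gives `A ≥ m`, i.e. `m ≤ inf spec A`.
-/

section Reflection

variable {R : Type*} [Ring R] {p a b : R}

lemma IsIdempotentElem.reflection_mul_self (hp : IsIdempotentElem p) :
    (2 * p - 1) * (2 * p - 1) = 1 := by
  calc (2 * p - 1) * (2 * p - 1) = 4 * (p * p) - 4 * p + 1 := by noncomm_ring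
    _ = 1 := by rw [hp.eq]; abel

lemma IsIdempotentElem.reflection_conj_of_commute (hp : IsIdempotentElem p) (ha : Commute a p) :
    (2 * p - 1) * a * (2 * p - 1) = a := by
  have hcomm : Commute a (2 * p - 1) :=
    ((Commute.ofNat_right a 2).mul_right ha).sub_right (.one_right a)
  rw [mul_assoc, hcomm.eq, ← mul_assoc, hp.reflection_mul_self, one_mul]

lemma reflection_conj_of_diag_blocks_eq_zero (h₁ : p * b * p = 0)
    (h₂ : (1 - p) * b * (1 - p) = 0) : (2 * p - 1) * b * (2 * p - 1) = -b := by
  calc (2 * p - 1) * b * (2 * p - 1) = 2 * (p * b * p) + 2 * ((1 - p) * b * (1 - p)) - b := by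
        noncomm_ring
    _ = -b := by rw [h₁, h₂]; noncomm_ring

lemma spectrum_add_eq_spectrum_sub_of_diag_blocks_eq_zero (S : Type*) [CommSemiring S]
    [Algebra S R]
    (hp : IsIdempotentElem p) (ha : Commute a p) (h₁ : p * b * p = 0)
    (h₂ : (1 - p) * b * (1 - p) = 0) :
    spectrum S (a + b) = spectrum S (a - b) := by
  let u : Rˣ := ⟨2 * p - 1, 2 * p - 1, hp.reflection_mul_self, hp.reflection_mul_self⟩
  have hconj : (u : R) * (a + b) * ↑u⁻¹ = a - b := by
    change (2 * p - 1) * (a + b) * (2 * p - 1) = a - b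
    rw [mul_add, add_mul, hp.reflection_conj_of_commute ha,
      reflection_conj_of_diag_blocks_eq_zero h₁ h₂, sub_eq_add_neg]
  rw [← hconj, spectrum.units_conjugate]

end Reflection

section CStarAlgebra

variable {A : Type*} [CStarAlgebra A] [PartialOrder A] [StarOrderedRing A] {a b : A}

lemma IsSelfAdjoint.algebraMap_sInf_spectrum_le (ha : IsSelfAdjoint a) :
    algebraMap ℝ A (sInf (spectrum ℝ a)) ≤ a :=
  (algebraMap_le_iff_le_spectrum ha).mpr fun _ hx ↦
    csInf_le (spectrum.isBounded a).bddBelow hx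

lemma IsSelfAdjoint.le_sInf_spectrum_of_algebraMap_le [Nontrivial A] (ha : IsSelfAdjoint a)
    {r : ℝ} (h : algebraMap ℝ A r ≤ a) : r ≤ sInf (spectrum ℝ a) :=
  le_csInf (ContinuousFunctionalCalculus.spectrum_nonempty a ha)
    ((algebraMap_le_iff_le_spectrum ha).mp h)

lemma sInf_spectrum_add_le_of_spectrum_add_eq_sub (ha : IsSelfAdjoint a) (hb : IsSelfAdjoint b)
    (hspec : spectrum ℝ (a + b) = spectrum ℝ (a - b)) :
    sInf (spectrum ℝ (a + b)) ≤ sInf (spectrum ℝ a) := by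
  rcases subsingleton_or_nontrivial A with hA | hA
  · rw [Subsingleton.elim b 0, add_zero]
  set m := sInf (spectrum ℝ (a + b))
  have hadd : algebraMap ℝ A m ≤ a + b := (ha.add hb).algebraMap_sInf_spectrum_le
  have hsub : algebraMap ℝ A m ≤ a - b := by
    simpa only [m, hspec] using (ha.sub hb).algebraMap_sInf_spectrum_le
  have hmid : algebraMap ℝ A m ≤ a := by
    have := smul_le_smul_of_nonneg_left (add_le_add hadd hsub) (by norm_num : (0 : ℝ) ≤ 1 / 2)
    convert this using 1 <;> module
  exact ha.le_sInf_spectrum_of_algebraMap_le hmid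

end CStarAlgebra

section InnerProductSpace

variable {H : Type*} [NormedAddCommGroup H] [InnerProductSpace ℂ H] [CompleteSpace H]

lemma IsSelfAdjoint.mul_mul_self_eq_zero_of_inner_eq_zero {Q : H →L[ℂ] H} (hQ : IsSelfAdjoint Q)
    {T : H →L[ℂ] H} (hT : ∀ ψ, inner ℂ (Q ψ) (T (Q ψ)) = 0) : Q * T * Q = 0 := by
  refine ContinuousLinearMap.coe_injective <| (inner_map_self_eq_zero _).mp fun ψ ↦ ?_
  calc inner ℂ (Q (T (Q ψ))) ψ = inner ℂ (T (Q ψ)) (Q ψ) := hQ.isSymmetric _ _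
    _ = 0 := by rw [← inner_conj_symm, hT, map_zero]

end InnerProductSpace

/-- Block variational inequality: let `H = H₁ ⊕ H₂` be encoded by an
orthogonal projection `P` (self-adjoint idempotent, projecting onto `H₁`).
Let `A` be bounded self-adjoint and block-diagonal (commuting with `P`),
and `B` bounded self-adjoint and block off-diagonal (its quadratic form
vanishes on the range of `P` and on the range of `1 - P`).  Then for every
`κ ∈ ℝ`, `inf spec (A + κB) ≤ inf spec A`; i.e. `κ = 0` is a (global, hence
local) maximum of `κ ↦ inf spec (A + κB)`. -/
theorem stmt_16
    {H : Type*} [NormedAddCommGroup H] [InnerProductSpace ℂ H]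
    [CompleteSpace H]
    (P A B : H →L[ℂ] H)
    (hP : IsSelfAdjoint P) (hPidem : P * P = P)
    (hA : IsSelfAdjoint A) (hB : IsSelfAdjoint B)
    (hAP : A * P = P * A)
    (hB1 : ∀ ψ : H, (inner ℂ (P ψ) (B (P ψ)) : ℂ) = 0)
    (hB2 : ∀ ψ : H, (inner ℂ ((1 - P) ψ) (B ((1 - P) ψ)) : ℂ) = 0)
    (κ : ℝ) :
    sInf {x : ℝ | (x : ℂ) ∈ spectrum ℂ (A + κ • B)} ≤
      sInf {x : ℝ | (x : ℂ) ∈ spectrum ℂ A} := by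
  have hPBP : P * (κ • B) * P = 0 := by
    rw [mul_smul_comm, smul_mul_assoc, hP.mul_mul_self_eq_zero_of_inner_eq_zero hB1, smul_zero]
  have hQBQ : (1 - P) * (κ • B) * (1 - P) = 0 := by
    rw [mul_smul_comm, smul_mul_assoc,
      ((IsSelfAdjoint.one _).sub hP).mul_mul_self_eq_zero_of_inner_eq_zero hB2, smul_zero]
  have hspec : spectrum ℝ (A + κ • B) = spectrum ℝ (A - κ • B) :=
    spectrum_add_eq_spectrum_sub_of_diag_blocks_eq_zero ℝ hPidem hAP hPBP hQBQ
  change sInf (algebraMap ℝ ℂ ⁻¹' _) ≤ sInf (algebraMap ℝ ℂ ⁻¹' _)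
  rw [spectrum.preimage_algebraMap, spectrum.preimage_algebraMap]
  have hκB : IsSelfAdjoint (κ • B) := by rw [IsSelfAdjoint, star_smul, star_trivial, hB]
  exact sInf_spectrum_add_le_of_spectrum_add_eq_sub hA hκB hspec
end
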